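/- Fix μ > 0, L > 0, ξ > 0, integers K ≥ 0 and M ≥ 1, losses x₁,…,x_K with x_k ≥ L for all k, and θ̄ > 0; set φ = ξMθ̄ and S = Σ_{k=1}^K log(x_k/L). For α₀ > 0 let the prior on the tail index be Gamma with shape α₀ and scale β₀ = μ/α₀ (so that the prior mean is μ and the prior coefficient of variation 1/√α₀ tends to 0 as α₀ → ∞), and put ν(α₀) = α₀ − 1 − Mξ + K and ω(α₀) = α₀/μ + S. Then lim_{α₀→∞} √(φ/ω(α₀)) · R_{ν(α₀)+1}(2√(ω(α₀) φ)) = μ. -/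

import Mathlib

open MeasureTheory ProbabilityTheory Filter

/-- Modified Bessel function of the third kind:
`K_ν(z) = (1/2) ∫₀^∞ u^(ν-1) exp(-z(u+1/u)/2) du`. -/
noncomputable def besselK (ν z : ℝ) : ℝ :=
  (1 / 2) * ∫ u in Set.Ioi (0 : ℝ), u ^ (ν - 1) * Real.exp (-(z * (u + 1 / u)) / 2)

/-- The ratio `R_ν(z) = K_{ν+1}(z) / K_ν(z)`. -/
noncomputable def besselR (ν z : ℝ) : ℝ := besselK (ν + 1) z / besselK ν z

/-!
Integrating by parts the derivative of `u ^ ν * exp (-z (u + 1/u) / 2)` over `(0, ∞)` gives the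
recurrence `K_{ν+1}(z) = K_{ν-1}(z) + (2ν/z) K_ν(z)`. As `K` is positive, this yields
`R_ν(z) ≥ 2ν/z` and `R_{ν+1}(z) = 2(ν+1)/z + 1/R_ν(z)`, so the posterior mean
`√(φ/ω) R_{ν+1}(2√(ωφ))` lies between `(ν+1)/ω` and `(ν+1)/ω + φ/ν`. As `α₀ → ∞` we have
`ν ~ α₀` and `ω ~ α₀/μ`, so both bounds tend to `μ`.
-/

open Set Real Topology

noncomputable def besselIntegrand (a z u : ℝ) : ℝ := u ^ a * exp (-(z * (u + 1 / u)) / 2)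

lemma besselK_eq_integral (ν z : ℝ) :
    besselK ν z = 1 / 2 * ∫ u in Ioi 0, besselIntegrand (ν - 1) z u := rfl

lemma exp_neg_le_factorial_div_pow {t : ℝ} (ht : 0 < t) (n : ℕ) :
    exp (-t) ≤ n.factorial / t ^ n := by
  rw [exp_neg, ← one_div, div_le_div_iff₀ (exp_pos t) (by positivity), one_mul,
    ← div_le_iff₀' (by positivity)]
  exact pow_div_factorial_le_exp t ht.le n

section besselIntegrand

variable {a z : ℝ}

lemma besselIntegrand_pos {u : ℝ} (hu : 0 < u) : 0 < besselIntegrand a z u := by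
  unfold besselIntegrand; positivity

lemma continuousOn_besselIntegrand : ContinuousOn (besselIntegrand a z) (Ioi 0) := by
  intro u (hu : 0 < u)
  exact ((continuousAt_rpow_const u a (Or.inl hu.ne')).mul
    (by fun_prop (disch := exact hu.ne'))).continuousWithinAt

/-- Trading the singular factor `exp (-z / (2u))` for a power `u ^ n` controls the integrand at
both ends of `(0, ∞)` by a Gamma-type integrand. -/
lemma besselIntegrand_le (hz : 0 < z) (n : ℕ) {u : ℝ} (hu : 0 < u) :
    besselIntegrand a z u ≤ n.factorial * (2 / z) ^ n * (u ^ (a + n) * exp (-(z / 2) * u)) := by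
  have hsplit : exp (-(z * (u + 1 / u)) / 2) = exp (-(z / 2) * u) * exp (-(z / (2 * u))) := by
    rw [← exp_add]; congr 1; field_simp; ring
  have hexp := exp_neg_le_factorial_div_pow (by positivity : 0 < z / (2 * u)) n
  rw [besselIntegrand, hsplit, rpow_add_natCast hu.ne']
  calc u ^ a * (exp (-(z / 2) * u) * exp (-(z / (2 * u))))
      ≤ u ^ a * (exp (-(z / 2) * u) * (n.factorial / (z / (2 * u)) ^ n)) := by gcongr
    _ = n.factorial * (2 / z) ^ n * (u ^ a * u ^ n * exp (-(z / 2) * u)) := by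
      rw [div_pow, div_pow, mul_pow]; field_simp

lemma integrableOn_besselIntegrand (hz : 0 < z) : IntegrableOn (besselIntegrand a z) (Ioi 0) := by
  obtain ⟨n, hn⟩ := exists_nat_gt (-a)
  have hgamma := integrableOn_rpow_mul_exp_neg_mul_rpow (by linarith : -1 < a + n) one_pos
    (by positivity : 0 < z / 2)
  refine (hgamma.const_mul (n.factorial * (2 / z) ^ n)).mono'
    (continuousOn_besselIntegrand.aestronglyMeasurable measurableSet_Ioi) ?_
  filter_upwards [ae_restrict_mem measurableSet_Ioi] with u hu
  rw [norm_of_nonneg (besselIntegrand_pos hu).le, rpow_one]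
  exact besselIntegrand_le hz n hu

lemma tendsto_besselIntegrand_nhdsGT_zero (hz : 0 < z) :
    Tendsto (besselIntegrand a z) (𝓝[>] 0) (𝓝 0) := by
  obtain ⟨n, hn⟩ := exists_nat_gt (-a)
  have hpos : 0 < a + n := by linarith
  have hcont : ContinuousAt (fun u => u ^ (a + n) * exp (-(z / 2) * u)) 0 :=
    (continuousAt_rpow_const 0 _ (Or.inr hpos.le)).mul (by fun_prop)
  have hdom := (hcont.tendsto.mono_left (nhdsWithin_le_nhds (s := Ioi 0))).const_mul
    (n.factorial * (2 / z) ^ n)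
  rw [zero_rpow hpos.ne', zero_mul, mul_zero] at hdom
  exact squeeze_zero' (eventually_nhdsWithin_of_forall fun u hu => (besselIntegrand_pos hu).le)
    (eventually_nhdsWithin_of_forall fun u hu => besselIntegrand_le hz n hu) hdom

lemma tendsto_besselIntegrand_atTop (hz : 0 < z) : Tendsto (besselIntegrand a z) atTop (𝓝 0) := by
  have hbound : ∀ u > 0, besselIntegrand a z u ≤ u ^ a * exp (-(z / 2) * u) := fun u hu => by
    simpa using besselIntegrand_le hz 0 hu
  exact squeeze_zero' (eventually_gt_atTop 0 |>.mono fun u hu => (besselIntegrand_pos hu).le)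
    (eventually_gt_atTop 0 |>.mono hbound)
    (tendsto_rpow_mul_exp_neg_mul_atTop_nhds_zero a (z / 2) (by positivity))

end besselIntegrand

lemma besselK_pos (ν : ℝ) {z : ℝ} (hz : 0 < z) : 0 < besselK ν z := by
  have hsupp : Function.support (besselIntegrand (ν - 1) z) ∩ Ioi 0 = Ioi 0 :=
    inter_eq_right.2 fun u hu => (besselIntegrand_pos hu).ne'
  have hint : 0 < ∫ u in Ioi 0, besselIntegrand (ν - 1) z u := by
    rw [setIntegral_pos_iff_support_of_nonneg_ae _ (integrableOn_besselIntegrand hz), hsupp]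
    · simp
    · filter_upwards [ae_restrict_mem measurableSet_Ioi] with u hu
      exact (besselIntegrand_pos hu).le
  rw [besselK_eq_integral]
  positivity

lemma besselK_add_one (ν : ℝ) {z : ℝ} (hz : 0 < z) :
    besselK (ν + 1) z = besselK (ν - 1) z + 2 * ν / z * besselK ν z := by
  set v : ℝ → ℝ := fun u => exp (-(z * (u + 1 / u)) / 2)
  have hu : ∀ u ∈ Ioi (0 : ℝ), HasDerivAt (fun u => u ^ ν) (ν * u ^ (ν - 1)) u :=
    fun u hu => hasDerivAt_rpow_const (Or.inl (ne_of_gt hu))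
  have hv : ∀ u ∈ Ioi (0 : ℝ), HasDerivAt v (-(z / 2) * (1 - 1 / u ^ 2) * v u) u := by
    intro u hu
    have hin : HasDerivAt (fun u => -(z * (u + 1 / u)) / 2) (-(z / 2) * (1 - 1 / u ^ 2)) u := by
      have h := (((hasDerivAt_id' u).fun_add (hasDerivAt_inv (ne_of_gt hu))).const_mul
        z).fun_neg.div_const 2
      simp only [one_div] at h ⊢
      exact h.congr_deriv (by ring)
    exact hin.exp.congr_deriv (mul_comm _ _)
  have hid : EqOn (fun u => ν * u ^ (ν - 1) * v u + u ^ ν * (-(z / 2) * (1 - 1 / u ^ 2) * v u))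
      (fun u => ν * besselIntegrand (ν - 1) z u - z / 2 * besselIntegrand ν z u
        + z / 2 * besselIntegrand (ν - 2) z u) (Ioi 0) := by
    intro u (hu : 0 < u)
    simp only [besselIntegrand, v, rpow_sub hu ν 2, rpow_two]
    ring
  have hI₁ := (integrableOn_besselIntegrand (a := ν - 1) hz).const_mul ν
  have hI₂ := (integrableOn_besselIntegrand (a := ν) hz).const_mul (z / 2)
  have hI₃ := (integrableOn_besselIntegrand (a := ν - 2) hz).const_mul (z / 2)
  have hI₁₂ : IntegrableOn (fun u => ν * besselIntegrand (ν - 1) z u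
      - z / 2 * besselIntegrand ν z u) (Ioi 0) := hI₁.sub hI₂
  have hparts := integral_Ioi_deriv_mul_eq_sub hu hv
    (IntegrableOn.congr_fun (hI₁₂.add hI₃) hid.symm measurableSet_Ioi)
    (tendsto_besselIntegrand_nhdsGT_zero hz) (tendsto_besselIntegrand_atTop hz)
  rw [setIntegral_congr_fun measurableSet_Ioi hid, integral_add hI₁₂ hI₃,
    integral_sub hI₁ hI₂, integral_const_mul, integral_const_mul, integral_const_mul] at hparts
  rw [besselK_eq_integral, besselK_eq_integral, besselK_eq_integral, add_sub_cancel_right,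
    show ν - 1 - 1 = ν - 2 by ring]
  field_simp
  linear_combination (-2) * hparts

lemma two_mul_div_le_besselR (ν : ℝ) {z : ℝ} (hz : 0 < z) : 2 * ν / z ≤ besselR ν z := by
  rw [besselR, besselK_add_one ν hz, le_div_iff₀ (besselK_pos ν hz)]
  linarith [besselK_pos (ν - 1) hz]

lemma besselR_add_one (ν : ℝ) {z : ℝ} (hz : 0 < z) :
    besselR (ν + 1) z = 2 * (ν + 1) / z + (besselR ν z)⁻¹ := by
  have hK := (besselK_pos (ν + 1) hz).ne'
  rw [besselR, besselR, inv_div, besselK_add_one (ν + 1) hz, add_sub_cancel_right]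
  field_simp
  ring

lemma besselR_add_one_le {ν z : ℝ} (hν : 0 < ν) (hz : 0 < z) :
    besselR (ν + 1) z ≤ 2 * (ν + 1) / z + z / (2 * ν) := by
  have hinv := inv_anti₀ (by positivity) (two_mul_div_le_besselR ν hz)
  rw [inv_div] at hinv
  rw [besselR_add_one ν hz]
  linarith

noncomputable def paretoPosteriorMean (ν ω φ : ℝ) : ℝ :=
  √(φ / ω) * besselR (ν + 1) (2 * √(ω * φ))

lemma paretoPosteriorMean_mem_Icc {ν ω φ : ℝ} (hν : 0 < ν) (hω : 0 < ω) (hφ : 0 < φ) :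
    paretoPosteriorMean ν ω φ ∈ Icc ((ν + 1) / ω) ((ν + 1) / ω + φ / ν) := by
  set s := √(φ / ω)
  have hs : 0 < s := sqrt_pos.2 (by positivity)
  have hss : s * s = φ / ω := mul_self_sqrt (by positivity)
  have hz : 2 * √(ω * φ) = 2 * (s * ω) := by
    rw [show ω * φ = φ / ω * ω ^ 2 by field_simp, sqrt_mul (by positivity), sqrt_sq hω.le]
  have hlow : s * (2 * (ν + 1) / (2 * (s * ω))) = (ν + 1) / ω := by field_simp
  have hgap : s * (2 * (s * ω) / (2 * ν)) = φ / ν := by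
    rw [show s * (2 * (s * ω) / (2 * ν)) = s * s * ω / ν by field_simp, hss]
    field_simp
  unfold paretoPosteriorMean
  rw [hz]
  constructor
  · rw [← hlow]
    exact mul_le_mul_of_nonneg_left (two_mul_div_le_besselR (ν + 1) (by positivity)) hs.le
  · rw [← hlow, ← hgap, ← mul_add]
    exact mul_le_mul_of_nonneg_left (besselR_add_one_le hν (by positivity)) hs.le

lemma tendsto_paretoPosteriorMean {ι : Type*} {l : Filter ι} {ν ω : ι → ℝ} {φ m : ℝ}
    (hφ : 0 < φ) (hν : Tendsto ν l atTop) (hω : ∀ᶠ i in l, 0 < ω i)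
    (hlim : Tendsto (fun i => (ν i + 1) / ω i) l (𝓝 m)) :
    Tendsto (fun i => paretoPosteriorMean (ν i) (ω i) φ) l (𝓝 m) := by
  have hup : Tendsto (fun i => (ν i + 1) / ω i + φ / ν i) l (𝓝 m) := by
    simpa using hlim.add (tendsto_const_nhds.div_atTop hν)
  have hmem : ∀ᶠ i in l, paretoPosteriorMean (ν i) (ω i) φ
      ∈ Icc ((ν i + 1) / ω i) ((ν i + 1) / ω i + φ / ν i) := by
    filter_upwards [hν.eventually_gt_atTop 0, hω] with i hνi hωi
    exact paretoPosteriorMean_mem_Icc hνi hωi hφ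
  exact tendsto_of_tendsto_of_tendsto_of_le_of_le' hlim hup (hmem.mono fun _ h => h.1)
    (hmem.mono fun _ h => h.2)

lemma tendsto_add_div_div_add_atTop {μ : ℝ} (hμ : μ ≠ 0) (a b : ℝ) :
    Tendsto (fun x : ℝ => (x + a) / (x / μ + b)) atTop (𝓝 μ) := by
  have h : Tendsto (fun x : ℝ => (1 + a * x⁻¹) / (μ⁻¹ + b * x⁻¹)) atTop
      (𝓝 ((1 + a * 0) / (μ⁻¹ + b * 0))) :=
    ((tendsto_inv_atTop_zero.const_mul a).const_add 1).div
      ((tendsto_inv_atTop_zero.const_mul b).const_add μ⁻¹) (by simpa)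
  rw [mul_zero, mul_zero, add_zero, add_zero, one_div, inv_inv] at h
  refine h.congr' ?_
  filter_upwards [eventually_ne_atTop 0] with x hx
  field_simp

theorem pareto_posterior_mean_tendsto_of_precise_prior_general
    (μ ξ θbar : ℝ) (hμ : 0 < μ) (hξ : 0 < ξ) (hθbar : 0 < θbar)
    (K M : ℕ) (hM : 1 ≤ M)
    (φ S : ℝ) (hφ : φ = ξ * M * θbar) :
    Tendsto (fun α₀ : ℝ =>
        Real.sqrt (φ / (α₀ / μ + S)) *
          besselR ((α₀ - 1 - M * ξ + K) + 1) (2 * Real.sqrt ((α₀ / μ + S) * φ)))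
      atTop (nhds μ) := by
  have hφ₀ : 0 < φ := by
    have hM₀ : (0 : ℝ) < M := Nat.cast_pos.2 hM
    rw [hφ]
    positivity
  have hν : Tendsto (fun α₀ : ℝ => α₀ - 1 - M * ξ + K) atTop atTop :=
    (tendsto_atTop_add_const_right _ (K - 1 - M * ξ) tendsto_id).congr fun α₀ => by simp only [id]; ring
  have hω : Tendsto (fun α₀ : ℝ => α₀ / μ + S) atTop atTop :=
    tendsto_atTop_add_const_right _ S (tendsto_id.atTop_div_const hμ)
  have hlim : Tendsto (fun α₀ : ℝ => (α₀ - 1 - M * ξ + K + 1) / (α₀ / μ + S)) atTop (𝓝 μ) :=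
    (tendsto_add_div_div_add_atTop hμ.ne' (K - M * ξ) S).congr fun α₀ => by ring
  exact tendsto_paretoPosteriorMean hφ₀ hν (hω.eventually_gt_atTop 0) hlim

/-- **Theorem 4e: vanishing coefficient of variation of the prior.**
Keeping the prior mean `μ = α₀β₀` of the Pareto tail index fixed and letting the prior
coefficient of variation `1/√α₀` tend to 0 (i.e. `α₀ → ∞`, `β₀ = μ/α₀`), the posterior
mean of the tail index converges to the prior mean `μ`. -/
theorem pareto_posterior_mean_tendsto_of_precise_prior
    (μ L ξ θbar : ℝ) (hμ : 0 < μ) (hL : 0 < L) (hξ : 0 < ξ) (hθbar : 0 < θbar)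
    (K M : ℕ) (hM : 1 ≤ M) (x : Fin K → ℝ) (hx : ∀ k, L ≤ x k)
    (φ S : ℝ) (hφ : φ = ξ * M * θbar) (hS : S = ∑ k, Real.log (x k / L)) :
    Tendsto (fun α₀ : ℝ =>
        Real.sqrt (φ / (α₀ / μ + S)) *
          besselR ((α₀ - 1 - M * ξ + K) + 1) (2 * Real.sqrt ((α₀ / μ + S) * φ)))
      atTop (nhds μ) :=
  pareto_posterior_mean_tendsto_of_precise_prior_general μ ξ θbar hμ hξ hθbar K M hM φ S hφ
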